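/- arXiv:2506.02517 — 2 statements merged into one kernel-verified Lean document; each statement's English description precedes it below -/
import Mathlib

section
/- (Cartier–Foata normal form) Let G be a finite simple graph and T(G) its trace monoid. For every nonempty element w ∈ T(G) there exist a unique integer h ≥ 1 and a unique sequence of cliques c₁, ..., c_h in T(G) such that w = c₁c₂···c_h and consecutive cliques are in normal position: for every 1 ≤ j < h and every letter v occurring in c_{j+1}, there exists a letter u occurring in c_j with (u,v) not an edge of G. -/
def traceRel {V : Type*} (G : SimpleGraph V) :
    FreeMonoid V → FreeMonoid V → Prop := fun a b =>
  ∃ u v, G.Adj u v ∧ a = FreeMonoid.of u * FreeMonoid.of v ∧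
    b = FreeMonoid.of v * FreeMonoid.of u

def traceCon {V : Type*} (G : SimpleGraph V) : Con (FreeMonoid V) :=
  conGen (traceRel G)

/-- The trace monoid of `G`. -/
abbrev TraceMonoid {V : Type*} (G : SimpleGraph V) := (traceCon G).Quotient

/-- The element of the trace monoid given by the product of the (distinct, pairwise
adjacent) letters of a clique `c`, in increasing order; since the letters of a clique
pairwise commute, this represents the clique as an element of `T(G)`. -/
def cliqueProd {L : ℕ} (G : SimpleGraph (Fin L)) (c : Finset (Fin L)) : TraceMonoid G :=
  ((((c.sort (· ≤ ·)).map FreeMonoid.of).prod : FreeMonoid (Fin L)) :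
    (traceCon G).Quotient)

/-- Cliques `c → c'` are in normal position: every letter of `c'` fails to commute with
some letter of `c`. -/
def NormalPosition {L : ℕ} (G : SimpleGraph (Fin L)) (c c' : Finset (Fin L)) : Prop :=
  ∀ v ∈ c', ∃ u ∈ c, ¬ G.Adj u v

/-!
Keep the cliques of a partial normal form as a stack, the last clique on top (i.e. as the
reversed list). A letter `v` is inserted into the clique directly above the topmost clique
that blocks it (contains a letter not commuting with `v`), or into a new clique on top if the
top clique blocks it, or into the bottom clique if nothing blocks it. Insertion keeps the
cliques in normal position and multiplies the product by `v`, and two commuting letters can be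
inserted in either order with the same result. So folding the insertion over a word depends
only on its trace: folding a representative of `w` gives a normal form of `w`, and folding the
letters of any normal form of `w` gives back that normal form, which is therefore unique.
-/

open List

namespace CartierFoata

section Insertion

variable {V : Type*} {G : SimpleGraph V}

variable (G) in
def Blocked (c : Finset V) (v : V) : Prop := ∃ u ∈ c, ¬ G.Adj u v

variable (G) in
def TopBlocks (s : List (Finset V)) (v : V) : Prop := ∀ c ∈ s.head?, Blocked G c v

theorem not_blocked_iff {c : Finset V} {v : V} : ¬ Blocked G c v ↔ ∀ u ∈ c, G.Adj u v := by
  simp [Blocked]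

theorem Blocked.mono {c d : Finset V} {v : V} (h : c ⊆ d) (hb : Blocked G c v) :
    Blocked G d v :=
  let ⟨u, hu, huv⟩ := hb; ⟨u, h hu, huv⟩

theorem not_blocked_singleton {u v : V} (h : G.Adj u v) : ¬ Blocked G {u} v :=
  not_blocked_iff.2 fun _ hw => Finset.mem_singleton.1 hw ▸ h

theorem topBlocks_nil (v : V) : TopBlocks G [] v := nofun

@[simp]
theorem topBlocks_cons {c : Finset V} {s : List (Finset V)} {v : V} :
    TopBlocks G (c :: s) v ↔ Blocked G c v := by
  simp [TopBlocks]

variable [DecidableEq V]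

theorem not_blocked_insert {c : Finset V} {u v : V} (h : G.Adj u v) (hc : ¬ Blocked G c v) :
    ¬ Blocked G (insert u c) v := by
  simpa [not_blocked_iff, h] using hc

theorem blocked_iff_of_subset_insert {c c' : Finset V} {u v : V} (h : G.Adj v u)
    (h₁ : c ⊆ c') (h₂ : c' ⊆ insert v c) : Blocked G c' u ↔ Blocked G c u :=
  ⟨fun ⟨w, hw, hwu⟩ =>
    ⟨w, (Finset.mem_insert.1 (h₂ hw)).resolve_left (by rintro rfl; exact hwu h), hwu⟩,
    Blocked.mono h₁⟩

theorem isClique_insert_of_forall_adj {c : Finset V} {v : V} (hc : G.IsClique (c : Set V))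
    (hv : ∀ u ∈ c, G.Adj u v) : G.IsClique (insert v c : Finset V) := by
  rw [Finset.coe_insert]
  exact hc.insert fun u hu _ => (hv u hu).symm

variable (G) in
open Classical in
noncomputable def foataInsert : List (Finset V) → V → List (Finset V)
  | [], v => [{v}]
  | c :: cs, v =>
    if Blocked G c v then {v} :: c :: cs
    else if TopBlocks G cs v then insert v c :: cs
    else c :: foataInsert cs v

theorem foataInsert_of_topBlocks {s : List (Finset V)} {v : V} (h : TopBlocks G s v) :
    foataInsert G s v = {v} :: s := by
  cases s with
  | nil => simp [foataInsert]
  | cons c cs => simp [foataInsert, topBlocks_cons.1 h]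

theorem foataInsert_cons_of_topBlocks {c : Finset V} {cs : List (Finset V)} {v : V}
    (hc : ¬ Blocked G c v) (hcs : TopBlocks G cs v) :
    foataInsert G (c :: cs) v = insert v c :: cs := by
  simp [foataInsert, hc, hcs]

theorem foataInsert_cons_of_not_topBlocks {c : Finset V} {cs : List (Finset V)} {v : V}
    (hc : ¬ Blocked G c v) (hcs : ¬ TopBlocks G cs v) :
    foataInsert G (c :: cs) v = c :: foataInsert G cs v := by
  simp [foataInsert, hc, hcs]

theorem exists_foataInsert_eq_cons {s : List (Finset V)} {v : V} (hs : ¬ TopBlocks G s v) :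
    ∃ c cs c' t, s = c :: cs ∧ foataInsert G s v = c' :: t ∧ c ⊆ c' ∧ c' ⊆ insert v c := by
  obtain _ | ⟨c, cs⟩ := s
  · exact absurd (topBlocks_nil v) hs
  rw [topBlocks_cons] at hs
  by_cases hcs : TopBlocks G cs v
  · exact ⟨c, cs, _, _, rfl, foataInsert_cons_of_topBlocks hs hcs,
      Finset.subset_insert _ _, subset_rfl⟩
  · exact ⟨c, cs, _, _, rfl, foataInsert_cons_of_not_topBlocks hs hcs,
      subset_rfl, Finset.subset_insert _ _⟩

theorem topBlocks_foataInsert_iff {s : List (Finset V)} {u v : V} (h : G.Adj u v)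
    (hs : ¬ TopBlocks G s u) : TopBlocks G (foataInsert G s u) v ↔ TopBlocks G s v := by
  obtain ⟨c, cs, c', t, rfl, heq, h₁, h₂⟩ := exists_foataInsert_eq_cons hs
  rw [heq, topBlocks_cons, topBlocks_cons, blocked_iff_of_subset_insert h h₁ h₂]

theorem foataInsert_comm_of_topBlocks {s : List (Finset V)} {u v : V} (h : G.Adj u v)
    (hu : TopBlocks G s u) (hv : TopBlocks G s v) :
    foataInsert G (foataInsert G s u) v = foataInsert G (foataInsert G s v) u := by
  rw [foataInsert_of_topBlocks hu, foataInsert_of_topBlocks hv,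
    foataInsert_cons_of_topBlocks (not_blocked_singleton h) hv,
    foataInsert_cons_of_topBlocks (not_blocked_singleton h.symm) hu, Finset.pair_comm]

theorem foataInsert_comm_of_topBlocks_of_not {s : List (Finset V)} {u v : V} (h : G.Adj u v)
    (hu : TopBlocks G s u) (hv : ¬ TopBlocks G s v) :
    foataInsert G (foataInsert G s u) v = foataInsert G (foataInsert G s v) u := by
  rw [foataInsert_of_topBlocks hu, foataInsert_cons_of_not_topBlocks (not_blocked_singleton h) hv,
    foataInsert_of_topBlocks ((topBlocks_foataInsert_iff h.symm hv).2 hu)]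

theorem foataInsert_cons_comm_of_topBlocks_of_not {c : Finset V} {cs : List (Finset V)}
    {u v : V} (h : G.Adj u v) (hcu : ¬ Blocked G c u) (hcv : ¬ Blocked G c v)
    (hu : TopBlocks G cs u) (hv : ¬ TopBlocks G cs v) :
    foataInsert G (foataInsert G (c :: cs) u) v = foataInsert G (foataInsert G (c :: cs) v) u := by
  rw [foataInsert_cons_of_topBlocks hcu hu,
    foataInsert_cons_of_not_topBlocks (not_blocked_insert h hcv) hv,
    foataInsert_cons_of_not_topBlocks hcv hv,
    foataInsert_cons_of_topBlocks hcu ((topBlocks_foataInsert_iff h.symm hv).2 hu)]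

theorem foataInsert_comm {u v : V} (h : G.Adj u v) :
    ∀ s : List (Finset V), foataInsert G (foataInsert G s u) v = foataInsert G (foataInsert G s v) u
  | [] => foataInsert_comm_of_topBlocks h (topBlocks_nil u) (topBlocks_nil v)
  | c :: cs => by
    by_cases hcu : TopBlocks G (c :: cs) u <;> by_cases hcv : TopBlocks G (c :: cs) v
    · exact foataInsert_comm_of_topBlocks h hcu hcv
    · exact foataInsert_comm_of_topBlocks_of_not h hcu hcv
    · exact (foataInsert_comm_of_topBlocks_of_not h.symm hcv hcu).symm
    rw [topBlocks_cons] at hcu hcv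
    by_cases hu : TopBlocks G cs u <;> by_cases hv : TopBlocks G cs v
    · rw [foataInsert_cons_of_topBlocks hcu hu, foataInsert_cons_of_topBlocks hcv hv,
        foataInsert_cons_of_topBlocks (not_blocked_insert h hcv) hv,
        foataInsert_cons_of_topBlocks (not_blocked_insert h.symm hcu) hu, Finset.insert_comm]
    · exact foataInsert_cons_comm_of_topBlocks_of_not h hcu hcv hu hv
    · exact (foataInsert_cons_comm_of_topBlocks_of_not h.symm hcv hcu hv hu).symm
    · rw [foataInsert_cons_of_not_topBlocks hcu hu, foataInsert_cons_of_not_topBlocks hcv hv,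
        foataInsert_cons_of_not_topBlocks hcv (mt (topBlocks_foataInsert_iff h hu).1 hv),
        foataInsert_cons_of_not_topBlocks hcu (mt (topBlocks_foataInsert_iff h.symm hv).1 hu),
        foataInsert_comm h cs]

variable (G) in
def foldCon : Con (FreeMonoid V) where
  r a b := ∀ s, a.toList.foldl (foataInsert G) s = b.toList.foldl (foataInsert G) s
  iseqv := ⟨fun _ _ => rfl, fun h s => (h s).symm, fun h₁ h₂ s => (h₁ s).trans (h₂ s)⟩
  mul' h₁ h₂ s := by simp only [FreeMonoid.toList_mul, foldl_append, h₁, h₂]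

theorem traceCon_le_foldCon : traceCon G ≤ foldCon G :=
  Con.conGen_le.2 fun _ _ ⟨_, _, h, ha, hb⟩ s => by
    subst ha hb
    exact foataInsert_comm h s

theorem foldl_foataInsert_of_pairwise {l : List V} {s : List (Finset V)}
    (hl : l.Pairwise G.Adj) (hne : l ≠ []) (hs : ∀ x ∈ l, TopBlocks G s x) :
    l.foldl (foataInsert G) s = l.toFinset :: s := by
  induction l using List.reverseRecOn with
  | nil => exact absurd rfl hne
  | append_singleton l x ih =>
    rw [pairwise_append] at hl
    rw [foldl_append, foldl_cons, foldl_nil]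
    rcases eq_or_ne l [] with rfl | hl'
    · simp [foataInsert_of_topBlocks (hs x (by simp))]
    have hx : ¬ Blocked G l.toFinset x :=
      not_blocked_iff.2 fun u hu => hl.2.2 u (mem_toFinset.1 hu) x mem_cons_self
    rw [ih hl.1 hl' fun y hy => hs y (mem_append_left _ hy),
      foataInsert_cons_of_topBlocks hx (hs x (by simp)), toFinset_append]
    simp

end Insertion

section Product

variable {V : Type*} {G : SimpleGraph V}

variable (G) in
def letter (v : V) : TraceMonoid G := ((FreeMonoid.of v : FreeMonoid V) : TraceMonoid G)

theorem commute_letter {u v : V} (h : G.Adj u v) : Commute (letter G u) (letter G v) :=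
  (Con.eq _).2 (ConGen.Rel.of _ _ ⟨u, v, h, rfl, rfl⟩)

theorem coe_ofList (l : List V) :
    ((FreeMonoid.ofList l : FreeMonoid V) : TraceMonoid G) = (l.map (letter G)).prod := by
  induction l with
  | nil => rfl
  | cons x l ih => rw [FreeMonoid.ofList_cons, Con.coe_mul, ih]; rfl

end Product

section NormalForm

variable {L : ℕ} {G : SimpleGraph (Fin L)}

theorem pairwise_adj_sort {c : Finset (Fin L)} (hc : G.IsClique (c : Set (Fin L))) :
    (c.sort (· ≤ ·)).Pairwise G.Adj :=
  (c.sort_nodup _).pairwise_of_forall_ne fun _ ha _ hb =>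
    hc ((Finset.mem_sort _).1 ha) ((Finset.mem_sort _).1 hb)

theorem cliqueProd_eq_prod (c : Finset (Fin L)) :
    cliqueProd G c = ((c.sort (· ≤ ·)).map (letter G)).prod :=
  Con.coe_listProd _ _ _

theorem cliqueProd_eq_prod_of_perm {c : Finset (Fin L)} {l : List (Fin L)}
    (hc : G.IsClique (c : Set (Fin L))) (hl : (c.sort (· ≤ ·)).Perm l) :
    cliqueProd G c = (l.map (letter G)).prod := by
  rw [cliqueProd_eq_prod]
  refine (hl.map _).prod_eq' ?_
  rw [pairwise_map]
  exact (pairwise_adj_sort hc).imp commute_letter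

theorem cliqueProd_singleton (v : Fin L) : cliqueProd G {v} = letter G v := by
  simp [cliqueProd_eq_prod]

theorem cliqueProd_insert {c : Finset (Fin L)} {v : Fin L} (hc : G.IsClique (c : Set (Fin L)))
    (hv : ∀ u ∈ c, G.Adj u v) : cliqueProd G (insert v c) = cliqueProd G c * letter G v := by
  have hvc : v ∉ c := fun h => G.irrefl (hv v h)
  have hperm : ((insert v c).sort (· ≤ ·)).Perm (c.sort (· ≤ ·) ++ [v]) :=
    (Finset.sort_perm_toList _ _).trans <| (Finset.toList_insert hvc).trans <|
      ((Finset.sort_perm_toList _ _).symm.cons v).trans (perm_append_singleton v _).symm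
  rw [cliqueProd_eq_prod_of_perm (isClique_insert_of_forall_adj hc hv) hperm, map_append,
    prod_append, map_singleton, prod_singleton, cliqueProd_eq_prod]

theorem commute_letter_cliqueProd {c : Finset (Fin L)} {v : Fin L}
    (hv : ∀ u ∈ c, G.Adj u v) : Commute (letter G v) (cliqueProd G c) := by
  rw [cliqueProd_eq_prod]
  refine Commute.list_prod_right _ _ fun x hx => ?_
  obtain ⟨u, hu, rfl⟩ := mem_map.1 hx
  exact commute_letter (hv u ((Finset.mem_sort _).1 hu)).symm

theorem prod_map_cliqueProd (cs : List (Finset (Fin L))) :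
    (cs.map (cliqueProd G)).prod =
      ((FreeMonoid.ofList (cs.map fun c => c.sort (· ≤ ·)).flatten : FreeMonoid (Fin L)) :
        TraceMonoid G) := by
  rw [coe_ofList, map_flatten, prod_flatten, map_map, map_map]
  exact congrArg _ (map_congr_left fun c _ => cliqueProd_eq_prod c)

variable (G) in
def IsFoataStack (s : List (Finset (Fin L))) : Prop :=
  (∀ c ∈ s, c.Nonempty ∧ G.IsClique (c : Set (Fin L))) ∧
    s.IsChain fun c d => NormalPosition G d c

theorem isFoataStack_nil : IsFoataStack G [] := ⟨nofun, isChain_nil⟩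

theorem isFoataStack_cons {c : Finset (Fin L)} {s : List (Finset (Fin L))} :
    IsFoataStack G (c :: s) ↔ (c.Nonempty ∧ G.IsClique (c : Set (Fin L))) ∧
      (∀ d ∈ s.head?, NormalPosition G d c) ∧ IsFoataStack G s := by
  simp only [IsFoataStack, forall_mem_cons, isChain_cons]
  tauto

theorem IsFoataStack.cons_singleton {s : List (Finset (Fin L))} {v : Fin L}
    (h : IsFoataStack G s) (hv : TopBlocks G s v) : IsFoataStack G ({v} :: s) :=
  isFoataStack_cons.2 ⟨⟨Finset.singleton_nonempty v, by simp⟩,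
    fun d hd _ hx => Finset.mem_singleton.1 hx ▸ hv d hd, h⟩

theorem isFoataStack_foataInsert {s : List (Finset (Fin L))} (h : IsFoataStack G s) (v : Fin L) :
    IsFoataStack G (foataInsert G s v) := by
  induction s with
  | nil => exact foataInsert_of_topBlocks (topBlocks_nil v) ▸ h.cons_singleton (topBlocks_nil v)
  | cons c cs ih =>
    by_cases hcv : TopBlocks G (c :: cs) v
    · exact foataInsert_of_topBlocks hcv ▸ h.cons_singleton hcv
    rw [topBlocks_cons] at hcv
    obtain ⟨⟨hne, hcl⟩, hnp, hcs⟩ := isFoataStack_cons.1 h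
    by_cases hv : TopBlocks G cs v
    · rw [foataInsert_cons_of_topBlocks hcv hv]
      refine isFoataStack_cons.2 ⟨⟨Finset.insert_nonempty v c,
        isClique_insert_of_forall_adj hcl (not_blocked_iff.1 hcv)⟩, fun d hd => ?_, hcs⟩
      exact (Finset.forall_mem_insert _ _ _).2 ⟨hv d hd, hnp d hd⟩
    · obtain ⟨d, ds, d', t, rfl, heq, hdd', -⟩ := exists_foataInsert_eq_cons hv
      rw [foataInsert_cons_of_not_topBlocks hcv hv, isFoataStack_cons, heq]
      refine ⟨⟨hne, hcl⟩, ?_, heq ▸ ih hcs⟩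
      simp only [head?_cons, Option.mem_some_iff]
      rintro _ rfl x hx
      exact Blocked.mono hdd' (hnp d rfl x hx)

theorem isFoataStack_foldl {s : List (Finset (Fin L))} (h : IsFoataStack G s) (l : List (Fin L)) :
    IsFoataStack G (l.foldl (foataInsert G) s) := by
  induction l generalizing s with
  | nil => exact h
  | cons x l ih => exact ih (isFoataStack_foataInsert h x)

variable (G) in
def stackProd (s : List (Finset (Fin L))) : TraceMonoid G := (s.reverse.map (cliqueProd G)).prod

theorem stackProd_cons (c : Finset (Fin L)) (s : List (Finset (Fin L))) :
    stackProd G (c :: s) = stackProd G s * cliqueProd G c := by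
  simp [stackProd]

theorem stackProd_foataInsert {s : List (Finset (Fin L))}
    (hs : ∀ c ∈ s, G.IsClique (c : Set (Fin L))) (v : Fin L) :
    stackProd G (foataInsert G s v) = stackProd G s * letter G v := by
  induction s with
  | nil => rw [foataInsert_of_topBlocks (topBlocks_nil v), stackProd_cons, cliqueProd_singleton]
  | cons c cs ih =>
    by_cases hcv : TopBlocks G (c :: cs) v
    · rw [foataInsert_of_topBlocks hcv, stackProd_cons, cliqueProd_singleton]
    rw [topBlocks_cons] at hcv
    have hadj := not_blocked_iff.1 hcv
    by_cases hv : TopBlocks G cs v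
    · rw [foataInsert_cons_of_topBlocks hcv hv, stackProd_cons, stackProd_cons,
        cliqueProd_insert (hs c mem_cons_self) hadj, mul_assoc]
    · rw [foataInsert_cons_of_not_topBlocks hcv hv, stackProd_cons, stackProd_cons,
        ih fun d hd => hs d (mem_cons_of_mem c hd), mul_assoc,
        (commute_letter_cliqueProd hadj).eq, mul_assoc]

theorem stackProd_foldl {s : List (Finset (Fin L))} (h : IsFoataStack G s) (l : List (Fin L)) :
    stackProd G (l.foldl (foataInsert G) s) = stackProd G s * (l.map (letter G)).prod := by
  induction l generalizing s with
  | nil => simp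
  | cons x l ih =>
    rw [foldl_cons, ih (isFoataStack_foataInsert h x), stackProd_foataInsert (fun c hc => (h.1 c hc).2),
      map_cons, prod_cons, mul_assoc]

theorem foldl_foataInsert_sort {c : Finset (Fin L)} {s : List (Finset (Fin L))}
    (hne : c.Nonempty) (hc : G.IsClique (c : Set (Fin L)))
    (hs : ∀ d ∈ s.head?, NormalPosition G d c) :
    (c.sort (· ≤ ·)).foldl (foataInsert G) s = c :: s := by
  have hsort : c.sort (· ≤ ·) ≠ [] := by
    rw [← length_pos_iff, Finset.length_sort]
    exact hne.card_pos
  rw [foldl_foataInsert_of_pairwise (pairwise_adj_sort hc) hsort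
    fun x hx d hd => hs d hd x ((Finset.mem_sort _).1 hx), Finset.sort_toFinset]

theorem foldl_foataInsert_flatten {cs s : List (Finset (Fin L))}
    (hcs : ∀ c ∈ cs, c.Nonempty ∧ G.IsClique (c : Set (Fin L)))
    (hchain : cs.IsChain (NormalPosition G)) (hs : ∀ d ∈ s.head?, ∀ c ∈ cs.head?, NormalPosition G d c) :
    ((cs.map fun c => c.sort (· ≤ ·)).flatten).foldl (foataInsert G) s = cs.reverse ++ s := by
  induction cs generalizing s with
  | nil => rfl
  | cons c cs ih =>
    rw [isChain_cons] at hchain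
    obtain ⟨hc, hcs⟩ := forall_mem_cons.1 hcs
    rw [map_cons, flatten_cons, foldl_append,
      foldl_foataInsert_sort hc.1 hc.2 fun d hd => hs d hd c rfl,
      ih (s := c :: s) hcs hchain.2 fun d hd => Option.mem_some_iff.1 hd ▸ hchain.1,
      reverse_cons, append_assoc, singleton_append]

end NormalForm

end CartierFoata

/-- Cartier–Foata normal form: every nonempty element of the trace monoid factors
uniquely as a product of nonempty cliques with consecutive cliques in normal position. -/
theorem cartier_foata_normal_form {L : ℕ} (G : SimpleGraph (Fin L))
    (w : TraceMonoid G) (hw : w ≠ 1) :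
    ∃! cs : List (Finset (Fin L)),
      cs ≠ [] ∧
      (∀ c ∈ cs, c.Nonempty ∧ G.IsClique (c : Set (Fin L))) ∧
      List.Chain' (NormalPosition G) cs ∧
      (cs.map (cliqueProd G)).prod = w := by
  open CartierFoata in
  induction w using Con.induction_on with
  | _ a =>
  set s := a.toList.foldl (foataInsert G) []
  have hs : IsFoataStack G s := isFoataStack_foldl isFoataStack_nil _
  have hprod : (s.reverse.map (cliqueProd G)).prod = a := by
    rw [← stackProd, stackProd_foldl isFoataStack_nil, ← coe_ofList, FreeMonoid.ofList_toList]
    exact one_mul _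
  refine ⟨s.reverse, ⟨fun hnil => hw ?_, fun c hc => hs.1 c (mem_reverse.1 hc),
    isChain_reverse.2 hs.2, hprod⟩, ?_⟩
  · rw [← hprod, hnil]; rfl
  rintro cs ⟨-, hcs, hchain, hcs_prod⟩
  have hrel : traceCon G (FreeMonoid.ofList (cs.map fun c => c.sort (· ≤ ·)).flatten) a :=
    (Con.eq _).1 ((prod_map_cliqueProd cs).symm.trans hcs_prod)
  have hfold : cs.reverse = s := by
    rw [← append_nil cs.reverse, ← foldl_foataInsert_flatten (s := []) hcs hchain nofun]
    exact traceCon_le_foldCon hrel []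
  rw [← hfold, reverse_reverse]
end

section
/- Let G be a simple graph on [L], let ε be a Dyck path of length 2p with up-step index set ε↑ and down-step index set ε↓, and fix a labelling i : ε↑ → [L]. Then the number of closed paths e = w₀, w₁, ..., w_{2p} = e in the Cayley graph of the trace monoid T(G) whose step profile is ε and such that w_k = i(k)·w_{k-1} for every k ∈ ε↑ is at most p! (p factorial). -/
def tmOf {V : Type*} (G : SimpleGraph V) (v : V) : TraceMonoid G :=
  ((FreeMonoid.of v : FreeMonoid V) : (traceCon G).Quotient)

theorem traceCon_length {V : Type*} {G : SimpleGraph V} :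
    ∀ a b, (traceCon G) a b → a.length = b.length := by
  intro a b h
  induction h with
  | of a b h =>
      obtain ⟨u, v, _, ha, hb⟩ := h
      subst ha; subst hb; simp
  | refl => rfl
  | symm _ ih => omega
  | trans _ _ ih1 ih2 => omega
  | mul _ _ ih1 ih2 => simpa [FreeMonoid.length_mul] using by omega

/-- The (well-defined) length of an element of the trace monoid. -/
def tlen {V : Type*} {G : SimpleGraph V} (w : TraceMonoid G) : ℕ :=
  Con.liftOn w FreeMonoid.length (fun a b h => traceCon_length a b h)

/-- Adjacency in the Cayley graph of the trace monoid. -/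
def CayleyAdj {V : Type*} (G : SimpleGraph V) (w₁ w₂ : TraceMonoid G) : Prop :=
  ∃ v : V, w₁ = tmOf G v * w₂ ∨ w₂ = tmOf G v * w₁

/-- Closed paths of length `2p` at the empty word whose step profile is the Dyck path
`ε` and whose up step at time `k ∈ ε↑` adds the prescribed letter `i k`. -/
def LabeledPaths {L : ℕ} (G : SimpleGraph (Fin L)) (p : ℕ) (ε : ℕ → ℤ)
    (i : Fin (2 * p) → Fin L) : Type _ :=
  {w : Fin (2 * p + 1) → TraceMonoid G //
    w 0 = 1 ∧ w (Fin.last (2 * p)) = 1 ∧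
    (∀ k : Fin (2 * p), CayleyAdj G (w k.castSucc) (w k.succ)) ∧
    (∀ k : Fin (2 * p), (ε k = 1 ↔ tlen (w k.castSucc) < tlen (w k.succ))) ∧
    (∀ k : Fin (2 * p), ε k = 1 → w k.succ = tmOf G (i k) * w k.castSucc)}

/-- `ε` is a Dyck path of length `2p`. -/
def IsDyckPath (p : ℕ) (ε : ℕ → ℤ) : Prop :=
  (∀ k < 2 * p, ε k = 1 ∨ ε k = -1) ∧
  (∀ m : ℕ, m ≤ 2 * p → 0 ≤ ∑ k ∈ Finset.range m, ε k) ∧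
  ∑ k ∈ Finset.range (2 * p), ε k = 0

/-!
A closed path is determined by the letters it erases at its down steps, because the trace
monoid is left cancellative: erasing the first occurrence of a letter is compatible with the
commutation relations. Counting letter multiplicities along the path, every letter is erased
exactly as often as it is written, so the down steps can be matched injectively with up steps
carrying the same label. A path is therefore encoded by an injection of its `p` down steps into
its `p` up steps, and there are `p!` of those.
-/

open Finset

theorem Function.Embedding.exists_comp_eq_of_card_fiber_le {α β γ : Type*}
    [Fintype α] [Fintype β] [DecidableEq γ] {f : α → γ} {g : β → γ}
    (h : ∀ c, Fintype.card {a // f a = c} ≤ Fintype.card {b // g b = c}) :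
    ∃ e : α ↪ β, ∀ a, g (e a) = f a := by
  let φ c : {a // f a = c} ↪ {b // g b = c} := (Function.Embedding.nonempty_of_card_le (h c)).some
  refine ⟨(Equiv.sigmaFiberEquiv f).symm.toEmbedding.trans
    (((Function.Embedding.refl γ).sigmaMap φ).trans (Equiv.sigmaFiberEquiv g).toEmbedding), ?_⟩
  intro a
  exact (φ (f a) ⟨a, rfl⟩).2

section TraceMonoid

variable {V : Type*} {G : SimpleGraph V}

theorem traceCon_perm {a b : FreeMonoid V} (h : traceCon G a b) : a.toList.Perm b.toList := by
  induction h with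
  | of _ _ h =>
    obtain ⟨u, v, -, rfl, rfl⟩ := h
    exact List.Perm.swap v u []
  | refl => rfl
  | symm _ ih => exact ih.symm
  | trans _ _ ih₁ ih₂ => exact ih₁.trans ih₂
  | mul _ _ ih₁ ih₂ => exact ih₁.append ih₂

def TraceMonoid.content (w : TraceMonoid G) : Multiset V :=
  Con.liftOn w (fun a => (a.toList : Multiset V)) fun _ _ h =>
    Multiset.coe_eq_coe.2 (traceCon_perm h)

theorem TraceMonoid.content_one : (1 : TraceMonoid G).content = 0 := rfl

theorem TraceMonoid.content_tmOf_mul (v : V) (w : TraceMonoid G) :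
    (tmOf G v * w).content = v ::ₘ w.content := by
  induction w using Con.induction_on
  rfl

theorem tlen_tmOf_mul (v : V) (w : TraceMonoid G) : tlen (tmOf G v * w) = tlen w + 1 := by
  induction w using Con.induction_on
  rfl

theorem traceCon_erase [DecidableEq V] {a b : FreeMonoid V} (h : traceCon G a b) (v : V) :
    traceCon G (.ofList (a.toList.erase v)) (.ofList (b.toList.erase v)) := by
  induction h with
  | of _ _ h =>
    obtain ⟨u, w, huw, rfl, rfl⟩ := h
    by_cases hu : u = v
    · subst hu
      simpa [huw.ne.symm] using (traceCon G).refl _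
    by_cases hw : w = v
    · subst hw
      simpa [hu] using (traceCon G).refl _
    have hswap : traceCon G (.of u * .of w) (.of w * .of u) :=
      ConGen.Rel.of _ _ ⟨u, w, huw, rfl, rfl⟩
    simpa [hu, hw] using hswap
  | refl => exact (traceCon G).refl _
  | symm _ ih => exact (traceCon G).symm ih
  | trans _ _ ih₁ ih₂ => exact (traceCon G).trans ih₁ ih₂
  | @mul x x' y y' hx hy ihx ihy =>
    have hmem : v ∈ x.toList ↔ v ∈ x'.toList := (traceCon_perm hx).mem_iff
    simp only [FreeMonoid.toList_mul, List.erase_append, hmem]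
    split_ifs
    · exact (traceCon G).mul ihx hy
    · exact (traceCon G).mul hx ihy

theorem tmOf_mul_left_injective (v : V) : Function.Injective (tmOf G v * ·) := by
  classical
  intro a b h
  induction a, b using Con.induction_on₂ with
  | H x y =>
    have := traceCon_erase ((traceCon G).eq.1 h) v
    simp only [FreeMonoid.toList_of_mul, List.erase_cons_head, FreeMonoid.ofList_toList] at this
    exact (traceCon G).eq.2 this

end TraceMonoid

open TraceMonoid

theorem IsDyckPath.card_up {p : ℕ} {ε : ℕ → ℤ} (hε : IsDyckPath p ε) :
    Fintype.card {k : Fin (2 * p) // ε k = 1} = p := by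
  obtain ⟨hpm, -, hsum⟩ := hε
  have hstep : ∀ k : Fin (2 * p), ε k = 2 * (if ε k = 1 then 1 else 0) - 1 := fun k => by
    rcases hpm k k.isLt with h | h <;> simp [h]
  rw [← Fin.sum_univ_eq_sum_range, sum_congr rfl fun k _ => hstep k, sum_sub_distrib, ← mul_sum,
    sum_boole] at hsum
  rw [Fintype.card_subtype]
  simp only [sum_const, card_univ, Fintype.card_fin, Int.nsmul_eq_mul, Nat.cast_mul, Nat.cast_ofNat,
    mul_one] at hsum
  omega

theorem IsDyckPath.card_down {p : ℕ} {ε : ℕ → ℤ} (hε : IsDyckPath p ε) :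
    Fintype.card {k : Fin (2 * p) // ¬ ε k = 1} = p := by
  rw [Fintype.card_subtype_compl, hε.card_up, Fintype.card_fin]
  omega

namespace LabeledPaths

variable {L : ℕ} {G : SimpleGraph (Fin L)} {p : ℕ} {ε : ℕ → ℤ} {i : Fin (2 * p) → Fin L}

/-- The letter of the Cayley graph edge `P.2.2.2.1 k` crossed at step `k`. -/
noncomputable def stepLetter (P : LabeledPaths G p ε i) (k : Fin (2 * p)) : Fin L :=
  (P.2.2.2.1 k).choose

theorem stepLetter_down (P : LabeledPaths G p ε i) {k : Fin (2 * p)} (hk : ¬ ε k = 1) :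
    P.1 k.castSucc = tmOf G (stepLetter P k) * P.1 k.succ := by
  obtain h | h := (P.2.2.2.1 k).choose_spec
  · exact h
  · refine absurd ((P.2.2.2.2.1 k).2 ?_) hk
    rw [h, tlen_tmOf_mul]
    exact Nat.lt_succ_self _

theorem eq_of_stepLetter_eq {P Q : LabeledPaths G p ε i}
    (h : ∀ k : Fin (2 * p), ¬ ε k = 1 → stepLetter P k = stepLetter Q k) : P = Q := by
  refine Subtype.ext <| funext fun m => ?_
  induction m using Fin.induction with
  | zero => rw [P.2.1, Q.2.1]
  | succ k ih =>
    by_cases hk : ε k = 1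
    · rw [P.2.2.2.2.2 k hk, Q.2.2.2.2.2 k hk, ih]
    · apply tmOf_mul_left_injective (stepLetter P k)
      beta_reduce
      rw [← stepLetter_down P hk, h k hk, ← stepLetter_down Q hk, ih]

theorem count_content_succ_add (P : LabeledPaths G p ε i) (k : Fin (2 * p)) (v : Fin L) :
    (P.1 k.succ).content.count v + (if ¬ ε k = 1 ∧ stepLetter P k = v then 1 else 0) =
      (P.1 k.castSucc).content.count v + (if ε k = 1 ∧ i k = v then 1 else 0) := by
  by_cases hk : ε k = 1
  · simp [hk, P.2.2.2.2.2 k hk, content_tmOf_mul, Multiset.count_cons, eq_comm]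
  · simp [hk, stepLetter_down P hk, content_tmOf_mul, Multiset.count_cons, eq_comm]

theorem card_fiber_stepLetter_eq (P : LabeledPaths G p ε i) (v : Fin L) :
    Fintype.card {d : {k : Fin (2 * p) // ¬ ε k = 1} // stepLetter P d = v} =
      Fintype.card {u : {k : Fin (2 * p) // ε k = 1} // i u = v} := by
  let c : Fin (2 * p + 1) → ℕ := fun m => (P.1 m).content.count v
  have hends : ∑ k : Fin (2 * p), c k.succ = ∑ k : Fin (2 * p), c k.castSucc := by
    have h₀ : c 0 = 0 := by simp [c, P.2.1, content_one]
    have hlast : c (Fin.last _) = 0 := by simp [c, P.2.2.1, content_one]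
    have := (Fin.sum_univ_succ c).symm.trans (Fin.sum_univ_castSucc c)
    omega
  have hsum := sum_congr rfl fun k (_ : k ∈ univ) => count_content_succ_add P k v
  rw [sum_add_distrib, sum_add_distrib, hends, sum_boole, sum_boole] at hsum
  rw [Fintype.card_congr (Equiv.subtypeSubtypeEquivSubtypeInter (fun k : Fin (2 * p) => ¬ ε k = 1)
      (stepLetter P · = v)),
    Fintype.card_congr (Equiv.subtypeSubtypeEquivSubtypeInter (fun k : Fin (2 * p) => ε k = 1)
      (i · = v)),
    Fintype.card_subtype, Fintype.card_subtype]
  simpa [c] using hsum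

end LabeledPaths

open LabeledPaths

/-- The number of closed paths at the empty word in the Cayley graph of the trace monoid
with given Dyck step profile `ε` and prescribed up-step labels `i` is at most `p!`. -/
theorem card_labeledPaths_le_factorial {L : ℕ} (G : SimpleGraph (Fin L)) (p : ℕ)
    (ε : ℕ → ℤ) (hε : IsDyckPath p ε) (i : Fin (2 * p) → Fin L) :
    Nat.card (LabeledPaths G p ε i) ≤ Nat.factorial p := by
  have hmatch (P : LabeledPaths G p ε i) :
      ∃ e : {k : Fin (2 * p) // ¬ ε k = 1} ↪ {k : Fin (2 * p) // ε k = 1},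
        ∀ d, i (e d) = stepLetter P d :=
    Function.Embedding.exists_comp_eq_of_card_fiber_le fun v => (card_fiber_stepLetter_eq P v).le
  choose e he using hmatch
  have he_inj : Function.Injective e := fun P Q hPQ =>
    eq_of_stepLetter_eq fun (k : Fin (2 * p)) hk => by rw [← he P ⟨k, hk⟩, ← he Q ⟨k, hk⟩, hPQ]
  calc Nat.card (LabeledPaths G p ε i)
      ≤ Nat.card ({k : Fin (2 * p) // ¬ ε k = 1} ↪ {k : Fin (2 * p) // ε k = 1}) :=
        Nat.card_le_card_of_injective e he_inj
    _ = p.factorial := by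
      rw [Nat.card_eq_fintype_card, Fintype.card_embedding_eq, hε.card_up, hε.card_down,
        Nat.descFactorial_self]
end
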